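/- arXiv:2105.08295 — 2 statements merged into one kernel-verified Lean document; each statement's English description precedes it below -/
import Mathlib

section
/- Let U : ℝ³ → ℝ be a harmonic function on all of ℝ³ such that the partial derivatives ∂U/∂x₂ and ∂U/∂x₃ tend to 0 as |x| → ∞. Then there exist real constants a, b such that U(x₁,x₂,x₃) = a·x₁ + b for all x ∈ ℝ³. -/
/-!
For a direction `v = s eₖ` along which `∂ₖU` tends to `0` at infinity, the difference
`x ↦ U (x + v) - U x` is again harmonic, and by the mean value inequality it tends to `0` at
infinity. The maximum principle then forces it to vanish identically. Only `C²` regularity is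
needed for this: at an interior maximum every pure second derivative is `≤ 0`, so adding
`γ ∑ xⱼ²`, which raises the Laplacian by `2nγ > 0`, rules interior maxima out.
Hence `U` is invariant under translation along `e₂` and `e₃`, so it depends only on `x₁`, and
then `∂₁²U = ΔU = 0` makes it affine in `x₁` (`x₁` is `x 0`).
-/

/-- Partial derivative of a function on `Fin n → ℝ` in the `i`-th coordinate direction. -/
noncomputable def pderiv3 (i : Fin 3) (f : (Fin 3 → ℝ) → ℝ) : (Fin 3 → ℝ) → ℝ :=
  fun x => fderiv ℝ f x (Pi.single i 1)

open Filter Topology Bornology Set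

lemma IsLocalMax.hasDerivAt_hasDerivAt_nonpos {φ φ' : ℝ → ℝ} {a d : ℝ} (h : IsLocalMax φ a)
    (hφ : ∀ t, HasDerivAt φ (φ' t) t) (hφ' : HasDerivAt φ' d a) : d ≤ 0 := by
  by_contra! hd
  have hderiv : deriv φ = φ' := funext fun t => (hφ t).deriv
  have hmin : IsLocalMin φ a := isLocalMin_of_deriv_deriv_pos
    (by rwa [hderiv, hφ'.deriv]) (by rw [hderiv]; exact h.hasDerivAt_eq_zero (hφ a))
    (hφ a).continuousAt
  have hconst : φ =ᶠ[𝓝 a] fun _ => φ a := (h.and hmin).mono fun t ht => le_antisymm ht.1 ht.2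
  have hφ'_zero : φ' =ᶠ[𝓝 a] fun _ => 0 := by
    simpa [hderiv] using hconst.deriv
  exact hd.ne' ((hφ'.congr_of_eventuallyEq hφ'_zero.symm).unique (hasDerivAt_const a 0))

lemma eq_mul_add_of_hasDerivAt_of_hasDerivAt_zero {φ φ' : ℝ → ℝ}
    (hφ : ∀ t, HasDerivAt φ (φ' t) t) (hφ' : ∀ t, HasDerivAt φ' 0 t) (t : ℝ) :
    φ t = φ' 0 * t + φ 0 := by
  have hconst : ∀ t, φ' t = φ' 0 := fun t =>
    is_const_of_deriv_eq_zero (fun s => (hφ' s).differentiableAt) (fun s => (hφ' s).deriv) t 0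
  have hlin : ∀ s, HasDerivAt (fun s => φ s - φ' 0 * s) 0 s := fun s => by
    simpa [hconst s] using (hφ s).fun_sub ((hasDerivAt_id s).const_mul (φ' 0))
  have := is_const_of_deriv_eq_zero (fun s => (hlin s).differentiableAt)
    (fun s => (hlin s).deriv) t 0
  simp only [mul_zero, sub_zero] at this
  linarith

section LineDerivatives

variable {E F : Type*} [NormedAddCommGroup E] [NormedSpace ℝ E] [NormedAddCommGroup F]
  [NormedSpace ℝ F]

lemma hasDerivAt_comp_add_smul {f : E → F} {p v : E} {t : ℝ}
    (hf : DifferentiableAt ℝ f (p + t • v)) :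
    HasDerivAt (fun s : ℝ => f (p + s • v)) (fderiv ℝ f (p + t • v) v) t := by
  have hline : HasDerivAt (fun s : ℝ => p + s • v) v t := by
    simpa using ((hasDerivAt_id t).smul_const v).const_add p
  exact hf.hasFDerivAt.comp_hasDerivAt t hline

lemma fderiv_apply_eq_zero_of_forall_add_smul_eq {f : E → F} {v : E}
    (h : ∀ x (s : ℝ), f (x + s • v) = f x) (x : E) : fderiv ℝ f x v = 0 := by
  by_cases hf : DifferentiableAt ℝ f x
  · rw [← hf.lineDeriv_eq_fderiv, lineDeriv]
    simp [h]
  · simp [fderiv_zero_of_not_differentiableAt hf]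

lemma tendsto_sub_comp_add_of_tendsto_fderiv_apply {f : E → F} (hf : Differentiable ℝ f) (v : E)
    (h : Tendsto (fun x => fderiv ℝ f x v) (cobounded E) (𝓝 0)) :
    Tendsto (fun x => f (x + v) - f x) (cobounded E) (𝓝 0) := by
  rw [Metric.tendsto_nhds] at h ⊢
  intro ε hε
  obtain ⟨R, -, hR⟩ := hasBasis_cobounded_norm.eventually_iff.1 (h (ε / 2) (half_pos hε))
  filter_upwards [eventually_cobounded_le_norm (R + ‖v‖)] with x hx
  have hline : ∀ t ∈ Icc (0 : ℝ) 1, HasDerivWithinAt (fun s : ℝ => f (x + s • v))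
      (fderiv ℝ f (x + t • v) v) (Icc 0 1) t :=
    fun t _ => (hasDerivAt_comp_add_smul (hf _)).hasDerivWithinAt
  have hbound : ∀ t ∈ Ico (0 : ℝ) 1, ‖fderiv ℝ f (x + t • v) v‖ ≤ ε / 2 := by
    rintro t ⟨ht₀, ht₁⟩
    have hfar : R ≤ ‖x + t • v‖ := calc
      R ≤ ‖x‖ - ‖t • v‖ := by
        rw [norm_smul, Real.norm_of_nonneg ht₀]
        nlinarith [norm_nonneg v]
      _ ≤ ‖x + t • v‖ := by simpa using norm_sub_norm_le x (-(t • v))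
    simpa using (hR hfar).le
  have := norm_image_sub_le_of_norm_deriv_le_segment_01' hline hbound
  simp only [one_smul, zero_smul, add_zero] at this
  rw [dist_zero_right]
  linarith

lemma exists_apply_smul_eq_mul_add {f : E → ℝ} (hf : ContDiff ℝ 2 f) {v : E}
    (h : ∀ x, fderiv ℝ (fun y => fderiv ℝ f y v) x v = 0) :
    ∃ a b : ℝ, ∀ t : ℝ, f (t • v) = a * t + b := by
  have hd : Differentiable ℝ fun y => fderiv ℝ f y v :=
    ((hf.fderiv_right (by norm_num)).clm_apply contDiff_const).differentiable one_ne_zero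
  have hline := eq_mul_add_of_hasDerivAt_of_hasDerivAt_zero (φ := fun t : ℝ => f (0 + t • v))
    (fun t => hasDerivAt_comp_add_smul (hf.differentiable two_ne_zero _))
    (fun t => by simpa [h] using hasDerivAt_comp_add_smul (hd (0 + t • v)))
  exact ⟨_, _, fun t => by simpa using hline t⟩

end LineDerivatives

section Coordinates

variable {ι : Type*} [Fintype ι]

lemma sum_sq_le_card_mul_norm_sq (x : ι → ℝ) : ∑ j, x j ^ 2 ≤ Fintype.card ι * ‖x‖ ^ 2 :=
  calc ∑ j, x j ^ 2 ≤ ∑ _j : ι, ‖x‖ ^ 2 := Finset.sum_le_sum fun j _ => by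
        simpa using pow_le_pow_left₀ (abs_nonneg _) (norm_le_pi_norm x j) 2
    _ = Fintype.card ι * ‖x‖ ^ 2 := by simp

variable [DecidableEq ι]

/-- For `ι = Fin 3` this is `pderiv3` by definition. -/
noncomputable def partialDeriv (i : ι) (f : (ι → ℝ) → ℝ) : (ι → ℝ) → ℝ :=
  fun x => fderiv ℝ f x (Pi.single i 1)

noncomputable def coordLaplacian (f : (ι → ℝ) → ℝ) (x : ι → ℝ) : ℝ :=
  ∑ i, partialDeriv i (partialDeriv i f) x

lemma contDiff_partialDeriv {f : (ι → ℝ) → ℝ} {m n : WithTop ℕ∞} (hf : ContDiff ℝ n f)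
    (hmn : m + 1 ≤ n) (i : ι) : ContDiff ℝ m (partialDeriv i f) :=
  (hf.fderiv_right hmn).clm_apply contDiff_const

lemma partialDeriv_neg (f : (ι → ℝ) → ℝ) (i : ι) :
    partialDeriv i (fun x => -f x) = fun x => -partialDeriv i f x := by
  ext x
  simp [partialDeriv, fderiv_fun_neg]

lemma partialDeriv_sub {f g : (ι → ℝ) → ℝ} (hf : Differentiable ℝ f) (hg : Differentiable ℝ g)
    (i : ι) :
    partialDeriv i (fun x => f x - g x) = fun x => partialDeriv i f x - partialDeriv i g x := by
  ext x
  simp [partialDeriv, fderiv_fun_sub (hf x) (hg x)]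

lemma partialDeriv_comp_add_right (f : (ι → ℝ) → ℝ) (a : ι → ℝ) (i : ι) :
    partialDeriv i (fun x => f (x + a)) = fun x => partialDeriv i f (x + a) := by
  ext x
  simp [partialDeriv, fderiv_comp_add_right]

lemma partialDeriv_add_const_mul_sum_sq {f : (ι → ℝ) → ℝ} (hf : Differentiable ℝ f) (c : ℝ)
    (i : ι) : partialDeriv i (fun x => f x + c * ∑ j, x j ^ 2) =
      fun x => partialDeriv i f x + c * (2 * x i) := by
  ext x
  have hsq : ∀ j, HasFDerivAt (fun x : ι → ℝ => x j ^ 2)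
      ((2 • x j ^ (2 - 1)) • ContinuousLinearMap.proj (R := ℝ) (φ := fun _ : ι => ℝ) j) x :=
    fun j => (hasFDerivAt_apply j x).pow 2
  have hsum := (HasFDerivAt.fun_sum (u := Finset.univ) fun j _ => hsq j).const_mul c
  rw [partialDeriv, ((hf x).hasFDerivAt.fun_add hsum).fderiv]
  simp [partialDeriv, Pi.single_apply]

lemma partialDeriv_add_const_mul_apply {f : (ι → ℝ) → ℝ} (hf : Differentiable ℝ f) (c : ℝ)
    (i : ι) : partialDeriv i (fun x => f x + c * x i) = fun x => partialDeriv i f x + c := by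
  ext x
  have hcoord := (hasFDerivAt_apply (𝕜 := ℝ) (F' := fun _ : ι => ℝ) i x).const_mul c
  rw [partialDeriv, ((hf x).hasFDerivAt.fun_add hcoord).fderiv]
  simp [partialDeriv]

lemma coordLaplacian_neg (f : (ι → ℝ) → ℝ) (x : ι → ℝ) :
    coordLaplacian (fun x => -f x) x = -coordLaplacian f x := by
  simp [coordLaplacian, partialDeriv_neg]

lemma coordLaplacian_sub {f g : (ι → ℝ) → ℝ} (hf : ContDiff ℝ 2 f) (hg : ContDiff ℝ 2 g)
    (x : ι → ℝ) :
    coordLaplacian (fun x => f x - g x) x = coordLaplacian f x - coordLaplacian g x := by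
  have hd : ∀ {h : (ι → ℝ) → ℝ}, ContDiff ℝ 2 h → ∀ i, Differentiable ℝ (partialDeriv i h) :=
    fun hh i => (contDiff_partialDeriv hh (by norm_num) i).differentiable one_ne_zero
  simp [coordLaplacian, partialDeriv_sub (hf.differentiable two_ne_zero)
    (hg.differentiable two_ne_zero), partialDeriv_sub (hd hf _) (hd hg _)]

lemma coordLaplacian_comp_add_right (f : (ι → ℝ) → ℝ) (a x : ι → ℝ) :
    coordLaplacian (fun x => f (x + a)) x = coordLaplacian f (x + a) := by
  simp [coordLaplacian, partialDeriv_comp_add_right]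

lemma coordLaplacian_add_const_mul_sum_sq {f : (ι → ℝ) → ℝ} (hf : ContDiff ℝ 2 f) (c : ℝ)
    (x : ι → ℝ) : coordLaplacian (fun x => f x + c * ∑ j, x j ^ 2) x =
      coordLaplacian f x + 2 * c * Fintype.card ι := by
  have h : ∀ i, partialDeriv i (partialDeriv i fun x => f x + c * ∑ j, x j ^ 2) x =
      partialDeriv i (partialDeriv i f) x + 2 * c := by
    intro i
    have hd := (contDiff_partialDeriv hf (by norm_num) i).differentiable one_ne_zero
    rw [partialDeriv_add_const_mul_sum_sq (hf.differentiable two_ne_zero)]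
    simp_rw [← mul_assoc, mul_comm c 2]
    rw [partialDeriv_add_const_mul_apply hd]
  simp only [coordLaplacian, h, Finset.sum_add_distrib, Finset.sum_const, Finset.card_univ,
    nsmul_eq_mul]
  ring

lemma IsLocalMax.partialDeriv_partialDeriv_nonpos {f : (ι → ℝ) → ℝ} {p : ι → ℝ}
    (hf : ContDiff ℝ 2 f) (h : IsLocalMax f p) (i : ι) :
    partialDeriv i (partialDeriv i f) p ≤ 0 := by
  have hd := (contDiff_partialDeriv hf (by norm_num) i).differentiable one_ne_zero
  have h₀ : IsLocalMax f (p + (0 : ℝ) • Pi.single i 1) := by simpa using h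
  have hline : IsLocalMax (fun t : ℝ => f (p + t • Pi.single i 1)) 0 :=
    h₀.comp_continuous (g := fun t : ℝ => p + t • Pi.single i 1) (by fun_prop)
  have := hline.hasDerivAt_hasDerivAt_nonpos
    (fun t => hasDerivAt_comp_add_smul (hf.differentiable two_ne_zero _))
    (hasDerivAt_comp_add_smul (hd _))
  simpa [partialDeriv] using this

lemma not_isLocalMax_of_coordLaplacian_pos {f : (ι → ℝ) → ℝ} {p : ι → ℝ} (hf : ContDiff ℝ 2 f)
    (hp : 0 < coordLaplacian f p) : ¬IsLocalMax f p := fun h =>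
  hp.not_ge (Finset.sum_nonpos fun i _ => h.partialDeriv_partialDeriv_nonpos hf i)

lemma nonpos_of_coordLaplacian_nonneg [Nonempty ι] {f : (ι → ℝ) → ℝ} (hf : ContDiff ℝ 2 f)
    (hΔ : ∀ x, 0 ≤ coordLaplacian f x) (hf_le : ∀ ε > 0, ∀ᶠ x in cobounded (ι → ℝ), f x ≤ ε)
    (x₀ : ι → ℝ) : f x₀ ≤ 0 := by
  by_contra! hpos
  obtain ⟨R, -, hR⟩ := hasBasis_cobounded_norm.eventually_iff.1 (hf_le _ (half_pos hpos))
  set M := max R ‖x₀‖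
  set n : ℝ := (Fintype.card ι : ℝ)
  have hn : 0 < n := by simp [n, Fintype.card_pos]
  -- small enough that `γ ∑ xⱼ² < f x₀ / 2` on the ball of radius `M`
  set γ := f x₀ / (2 * (n * M ^ 2 + 1))
  have hγ : 0 < γ := by positivity
  have hγM : γ * (n * M ^ 2) < f x₀ / 2 := by
    rw [div_mul_eq_mul_div, div_lt_div_iff₀ (by positivity) two_pos]
    nlinarith [mul_nonneg hn.le (sq_nonneg M)]
  set F := fun x : ι → ℝ => f x + γ * ∑ j, x j ^ 2
  have hF : ContDiff ℝ 2 F := hf.add (contDiff_const.mul (by fun_prop))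
  obtain ⟨p, hpM, hpmax⟩ := (isCompact_closedBall (0 : ι → ℝ) M).exists_isMaxOn
    ⟨x₀, by simp [M]⟩ hF.continuous.continuousOn
  have hx₀p : f x₀ ≤ F p :=
    (le_add_of_nonneg_right (by positivity)).trans (hpmax (by simp [M]))
  rw [mem_closedBall_zero_iff] at hpM
  rcases hpM.lt_or_eq with hp | hp
  · refine not_isLocalMax_of_coordLaplacian_pos hF ?_
      (hpmax.isLocalMax (Metric.closedBall_mem_nhds_of_mem (by simpa using hp)))
    rw [coordLaplacian_add_const_mul_sum_sq hf]
    have := hΔ p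
    positivity
  · have hfp : f p ≤ f x₀ / 2 := hR (show R ≤ ‖p‖ from hp ▸ le_max_left _ _)
    have hq : ∑ j, p j ^ 2 ≤ n * M ^ 2 := hp ▸ sum_sq_le_card_mul_norm_sq p
    have : F p ≤ f x₀ / 2 + γ * (n * M ^ 2) :=
      add_le_add hfp (mul_le_mul_of_nonneg_left hq hγ.le)
    linarith

lemma eq_zero_of_coordLaplacian_eq_zero_of_tendsto [Nonempty ι] {f : (ι → ℝ) → ℝ}
    (hf : ContDiff ℝ 2 f) (hΔ : ∀ x, coordLaplacian f x = 0)
    (hlim : Tendsto f (cobounded (ι → ℝ)) (𝓝 0)) (x : ι → ℝ) : f x = 0 := by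
  have hle : ∀ {g : (ι → ℝ) → ℝ}, ContDiff ℝ 2 g → (∀ x, coordLaplacian g x = 0) →
      Tendsto g (cobounded (ι → ℝ)) (𝓝 0) → g x ≤ 0 := fun hg hΔg hlimg =>
    nonpos_of_coordLaplacian_nonneg hg (fun x => (hΔg x).ge)
      (fun _ hε => hlimg.eventually (eventually_le_nhds hε)) x
  have hneg : -f x ≤ 0 := hle hf.neg (fun x => by rw [coordLaplacian_neg, hΔ, neg_zero])
    (by simpa using hlim.neg)
  linarith [hle hf hΔ hlim]

lemma apply_add_eq_of_tendsto_fderiv_apply [Nonempty ι] {f : (ι → ℝ) → ℝ}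
    (hf : ContDiff ℝ 2 f) (hΔ : ∀ x, coordLaplacian f x = 0) {v : ι → ℝ}
    (hv : Tendsto (fun x => fderiv ℝ f x v) (cobounded (ι → ℝ)) (𝓝 0)) (x : ι → ℝ) :
    f (x + v) = f x := by
  have hfv : ContDiff ℝ 2 fun x => f (x + v) := hf.comp (contDiff_id.add contDiff_const)
  refine sub_eq_zero.1 (eq_zero_of_coordLaplacian_eq_zero_of_tendsto (hfv.sub hf) (fun y => ?_)
    (tendsto_sub_comp_add_of_tendsto_fderiv_apply (hf.differentiable two_ne_zero) v hv) x)
  rw [coordLaplacian_sub hfv hf, coordLaplacian_comp_add_right, hΔ, hΔ, sub_self]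

lemma apply_eq_apply_single_of_forall_apply_add_single_eq {f : (ι → ℝ) → ℝ} {i : ι}
    (h : ∀ k ≠ i, ∀ x (s : ℝ), f (x + Pi.single k s) = f x) (x : ι → ℝ) :
    f x = f (Pi.single i (x i)) := by
  have hsum : ∀ s : Finset ι, i ∉ s → ∀ y, f (y + ∑ k ∈ s, Pi.single k (x k)) = f y := by
    intro s
    induction s using Finset.induction_on with
    | empty => simp
    | insert k s hks ih =>
      intro hi y
      rw [Finset.mem_insert, not_or] at hi
      rw [Finset.sum_insert hks, ← add_assoc, add_right_comm, h k (Ne.symm hi.1), ih hi.2]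
  calc f x = f (Pi.single i (x i) + ∑ k ∈ Finset.univ.erase i, Pi.single k (x k)) := by
        rw [Finset.add_sum_erase _ (fun k => Pi.single k (x k)) (Finset.mem_univ i),
          Finset.univ_sum_single]
    _ = f (Pi.single i (x i)) := hsum _ (Finset.notMem_erase i _) _

theorem exists_apply_eq_mul_add_of_tendsto_partialDeriv (i : ι) {f : (ι → ℝ) → ℝ}
    (hf : ContDiff ℝ 2 f) (hΔ : ∀ x, coordLaplacian f x = 0)
    (hdecay : ∀ k ≠ i, Tendsto (partialDeriv k f) (cobounded (ι → ℝ)) (𝓝 0)) :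
    ∃ a b : ℝ, ∀ x, f x = a * x i + b := by
  have : Nonempty ι := ⟨i⟩
  have hsingle : ∀ k (s : ℝ), s • (Pi.single k 1 : ι → ℝ) = Pi.single k s := fun k s => by
    rw [← Pi.single_smul', smul_eq_mul, mul_one]
  have hinv : ∀ k ≠ i, ∀ x (s : ℝ), f (x + Pi.single k s) = f x := fun k hk x s => by
    have hv : (fun x => fderiv ℝ f x (Pi.single k s)) = fun x => s * partialDeriv k f x :=
      funext fun x => by rw [← hsingle, map_smul, smul_eq_mul, partialDeriv]
    refine apply_add_eq_of_tendsto_fderiv_apply hf hΔ ?_ x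
    simpa [hv] using (hdecay k hk).const_mul s
  have hflat : ∀ k ≠ i, ∀ x, partialDeriv k (partialDeriv k f) x = 0 := fun k hk x => by
    have : partialDeriv k f = 0 := funext <|
      fderiv_apply_eq_zero_of_forall_add_smul_eq fun y s => by rw [hsingle]; exact hinv k hk y s
    simp [this, partialDeriv]
  have hii : ∀ x, partialDeriv i (partialDeriv i f) x = 0 := fun x => by
    rw [← hΔ x, coordLaplacian, Finset.sum_eq_single i (fun k _ hk => hflat k hk x) (by simp)]
  obtain ⟨a, b, hab⟩ := exists_apply_smul_eq_mul_add hf hii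
  exact ⟨a, b, fun x => by
    rw [apply_eq_apply_single_of_forall_apply_add_single_eq hinv x, ← hsingle, hab]⟩

end Coordinates

/-- A harmonic function on ℝ³ whose partial derivatives in the second and third
coordinates tend to 0 at infinity is an affine function of the first coordinate. -/
theorem harmonic_decay_two_partials_implies_affine_in_x1
    (U : (Fin 3 → ℝ) → ℝ)
    (hC2 : ContDiff ℝ 2 U)
    (hharm : ∀ x, (∑ i : Fin 3, pderiv3 i (pderiv3 i U) x) = 0)
    (hdecay : ∀ ε : ℝ, 0 < ε → ∃ R : ℝ, 0 < R ∧ ∀ x : Fin 3 → ℝ, R ≤ ‖x‖ →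
      |pderiv3 1 U x| < ε ∧ |pderiv3 2 U x| < ε) :
    ∃ a b : ℝ, ∀ x : Fin 3 → ℝ, U x = a * x 0 + b := by
  refine exists_apply_eq_mul_add_of_tendsto_partialDeriv 0 hC2 hharm fun k hk => ?_
  refine Metric.tendsto_nhds.2 fun ε hε => ?_
  obtain ⟨R, -, hR⟩ := hdecay ε hε
  refine hasBasis_cobounded_norm.eventually_iff.2 ⟨R, trivial, fun x hx => ?_⟩
  rw [Real.dist_0_eq_abs]
  fin_cases k
  · exact absurd rfl hk
  · exact (hR x hx).1
  · exact (hR x hx).2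
end

section
/- Let C₁₁, C₁₂, C₁₃, C₃₃, C₄₄ be real transversely isotropic elastic constants satisfying the positive-definiteness conditions C₄₄ > 0, C₁₁ − C₁₂ > 0, C₁₁ + C₁₂ + C₃₃ > 0, and (C₁₁ + C₁₂)C₃₃ > 2C₁₃², and suppose C₁₃ + C₄₄ ≠ 0. Let v be a positive root of C₃₃C₄₄v⁴ − (C₁₁C₃₃ + C₄₄² − (C₁₃ + C₄₄)²)v² + C₁₁C₄₄ = 0 and set γ = (C₁₁C₃₃ − C₃₃C₄₄v²)/((C₁₃ + C₄₄)C₁₁). For ξ = (ξ₁, ξ₂, ξ₃) ∈ ℝ³ \ {0} let η(ξ) = C₁₁(ξ₁² + ξ₂²)(C₄₄(ξ₁² + ξ₂²) + C₃₃ξ₃²) + ξ₃²(−C₁₃²(ξ₁² + ξ₂²) − 2C₁₃C₄₄(ξ₁² + ξ₂²) + C₃₃C₄₄ξ₃²). Then the rational function (ξ₃²(C₃₃ − C₁₃γ) + C₄₄(ξ₁² + ξ₂² − ξ₃²γ))/η(ξ) equals 1/(C₁₁(ξ₁² + ξ₂² + ξ₃²/v²)) for all ξ ∈ ℝ³ \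 {0} at which the denominators are nonzero. -/
/-- The key algebraic rational-function identity for the transversely isotropic medium:
with `v` a positive root of the quartic and `γ` as defined, the ratio of the special
numerator to the acoustic determinant `η(ξ)` collapses to `1/(C₁₁(ξ₁²+ξ₂²+ξ₃²/v²))`. -/
theorem transverse_isotropic_rational_identity
    (C11 C12 C13 C33 C44 v γ : ℝ)
    (h44 : 0 < C44) (h1112 : 0 < C11 - C12) (hsum : 0 < C11 + C12 + C33)
    (hpd : 2 * C13 ^ 2 < (C11 + C12) * C33)
    (hne : C13 + C44 ≠ 0)
    (hv : 0 < v)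
    (hroot : C33 * C44 * v ^ 4 - (C11 * C33 + C44 ^ 2 - (C13 + C44) ^ 2) * v ^ 2
        + C11 * C44 = 0)
    (hγ : γ = (C11 * C33 - C33 * C44 * v ^ 2) / ((C13 + C44) * C11)) :
    ∀ ξ1 ξ2 ξ3 : ℝ, ¬(ξ1 = 0 ∧ ξ2 = 0 ∧ ξ3 = 0) →
      (C11 * (ξ1 ^ 2 + ξ2 ^ 2) * (C44 * (ξ1 ^ 2 + ξ2 ^ 2) + C33 * ξ3 ^ 2)
          + ξ3 ^ 2 * (-C13 ^ 2 * (ξ1 ^ 2 + ξ2 ^ 2) - 2 * C13 * C44 * (ξ1 ^ 2 + ξ2 ^ 2)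
            + C33 * C44 * ξ3 ^ 2)) ≠ 0 →
      C11 * (ξ1 ^ 2 + ξ2 ^ 2 + ξ3 ^ 2 / v ^ 2) ≠ 0 →
      (ξ3 ^ 2 * (C33 - C13 * γ) + C44 * (ξ1 ^ 2 + ξ2 ^ 2 - ξ3 ^ 2 * γ))
          / (C11 * (ξ1 ^ 2 + ξ2 ^ 2) * (C44 * (ξ1 ^ 2 + ξ2 ^ 2) + C33 * ξ3 ^ 2)
            + ξ3 ^ 2 * (-C13 ^ 2 * (ξ1 ^ 2 + ξ2 ^ 2) - 2 * C13 * C44 * (ξ1 ^ 2 + ξ2 ^ 2)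
              + C33 * C44 * ξ3 ^ 2))
        = 1 / (C11 * (ξ1 ^ 2 + ξ2 ^ 2 + ξ3 ^ 2 / v ^ 2)) := by
  have hC11 : 0 < C11 := by nlinarith [sq_nonneg C13]
  intro ξ1 ξ2 ξ3 _ hη hD
  rw [div_eq_div_iff hη hD]
  have hv0 : v ≠ 0 := ne_of_gt hv
  subst hγ
  field_simp
  linear_combination ((ξ1^2+ξ2^2)*ξ3^2*(C13+C44)) * hroot
end
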